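/- arXiv:1109.6761 — 8 statements merged into one kernel-verified Lean document; each statement's English description precedes it below -/
import Mathlib

section
/- Let G be a connected distance-regular graph on a finite set A, let B be a finite set with |A| ≤ |B|, let ε > 0, and let M be a channel matrix from A to B satisfying ε-differential privacy with respect to G. Fix any vertex r ∈ A and, for each d from 0 to the diameter of G, let n_d be the number of vertices of G at graph distance d from r. Then H∞(A|B) ≥ log₂(Σ_d n_d · e^{−ε·d}); equivalently, Σ_{b∈B} max_{a∈A} M(a,b) ≤ |A| / Σ_d n_d · e^{−ε·d}. -/
open Finset

/-- The diameter of a graph on a finite vertex set: the maximum graph distance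
between any two vertices. -/
noncomputable def graphDiam {A : Type*} [Fintype A] (G : SimpleGraph A) : ℕ :=
  Finset.univ.sup fun p : A × A => G.dist p.1 p.2

/-- The number of vertices at graph distance `d` from `r`. -/
noncomputable def nAtDist {A : Type*} [Fintype A] (G : SimpleGraph A) (r : A) (d : ℕ) : ℕ :=
  (Finset.univ.filter fun a => G.dist r a = d).card

/-- `∑ d from 0 to diam, n_d · e^{-ε d}`. -/
noncomputable def expDistSum {A : Type*} [Fintype A] (G : SimpleGraph A) (ε : ℝ) (r : A) : ℝ :=
  ∑ d ∈ Finset.range (graphDiam G + 1), (nAtDist G r d : ℝ) * Real.exp (-(ε * d))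

/-- `ε`-differential privacy of a channel matrix with respect to a graph. -/
def SatisfiesDP {A B : Type*} (G : SimpleGraph A) (ε : ℝ) (M : A → B → ℝ) : Prop :=
  ∀ (b : B) (a a' : A), G.Adj a a' → M a b ≤ Real.exp ε * M a' b

/-- Distance-regularity: for any two vertices `x, y` at distance `i`, the number of
neighbors of `y` at distance `i-1` from `x` is `c i`, and the number of neighbors of `y`
at distance `i+1` from `x` is `b i`. -/
def IsDistanceRegular {A : Type*} [Fintype A] (G : SimpleGraph A) [DecidableRel G.Adj] : Prop :=
  ∃ c b : ℕ → ℕ, ∀ x y : A,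
    (Finset.univ.filter fun w => G.Adj y w ∧ G.dist x w + 1 = G.dist x y).card
      = c (G.dist x y) ∧
    (Finset.univ.filter fun w => G.Adj y w ∧ G.dist x w = G.dist x y + 1).card
      = b (G.dist x y)

section Aux

variable {A : Type*} [Fintype A] (G : SimpleGraph A)

/-- DP along a walk. -/
lemma dp_walk {B : Type*} (ε : ℝ) (M : A → B → ℝ)
    (hdp : SatisfiesDP G ε M) (b : B) :
    ∀ {a a' : A} (p : G.Walk a a'), M a b ≤ Real.exp (ε * p.length) * M a' b := by
  intro a a' p
  induction p with
  | nil => simp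
  | cons h p ih =>
    calc M _ b ≤ Real.exp ε * M _ b := hdp b _ _ h
    _ ≤ Real.exp ε * (Real.exp (ε * p.length) * M _ b) := by
        exact mul_le_mul_of_nonneg_left ih (Real.exp_pos ε).le
    _ = Real.exp (ε * (SimpleGraph.Walk.cons h p).length) * M _ b := by
        rw [← mul_assoc, ← Real.exp_add, SimpleGraph.Walk.length_cons]
        push_cast
        ring_nf

lemma dp_dist {B : Type*} (ε : ℝ) (M : A → B → ℝ)
    (hdp : SatisfiesDP G ε M) (hconn : G.Connected) (b : B) (a a' : A) :
    M a b ≤ Real.exp (ε * G.dist a a') * M a' b := by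
  obtain ⟨p, hp⟩ := hconn.exists_walk_length_eq_dist a a'
  have := dp_walk G ε M hdp b p
  rwa [hp] at this

/-- Spheres have the same cardinality around every vertex in a distance-regular graph. -/
lemma nAtDist_eq [DecidableRel G.Adj] (hconn : G.Connected) (hDR : IsDistanceRegular G)
    (r : A) : ∀ (d : ℕ) (x : A), nAtDist G x d = nAtDist G r d := by
  obtain ⟨c, bb, hcb⟩ := hDR
  have base : ∀ x : A, nAtDist G x 0 = 1 := by
    intro x
    have : (Finset.univ.filter fun a => G.dist x a = 0) = {x} := by
      ext a
      simp [hconn.dist_eq_zero_iff, eq_comm]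
    simp [nAtDist, this]
  -- double counting between consecutive spheres
  have key : ∀ (d : ℕ) (x : A),
      nAtDist G x (d + 1) * c (d + 1) = nAtDist G x d * bb d := by
    intro d x
    have lhs : nAtDist G x (d + 1) * c (d + 1)
        = ∑ y : A, ∑ w : A,
            if G.dist x y = d + 1 ∧ G.Adj y w ∧ G.dist x w = d then 1 else 0 := by
      rw [nAtDist, ← smul_eq_mul, ← Finset.sum_const, Finset.sum_filter]
      refine Finset.sum_congr rfl fun y _ => ?_
      by_cases hy : G.dist x y = d + 1
      · rw [if_pos hy]
        have h := (hcb x y).1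
        rw [hy] at h
        rw [← h, Finset.card_filter]
        refine Finset.sum_congr rfl fun w _ => ?_
        refine if_congr ?_ rfl rfl
        constructor
        · rintro ⟨h1, h2⟩; exact ⟨hy, h1, by omega⟩
        · rintro ⟨_, h1, h2⟩; exact ⟨h1, by omega⟩
      · rw [if_neg hy]
        symm
        refine Finset.sum_eq_zero fun w _ => ?_
        rw [if_neg]
        tauto
    have rhs : nAtDist G x d * bb d
        = ∑ w : A, ∑ y : A,
            if G.dist x y = d + 1 ∧ G.Adj y w ∧ G.dist x w = d then 1 else 0 := by
      rw [nAtDist, ← smul_eq_mul, ← Finset.sum_const, Finset.sum_filter]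
      refine Finset.sum_congr rfl fun w _ => ?_
      by_cases hw : G.dist x w = d
      · rw [if_pos hw]
        have h := (hcb x w).2
        rw [hw] at h
        rw [← h, Finset.card_filter]
        refine Finset.sum_congr rfl fun y _ => ?_
        refine if_congr ?_ rfl rfl
        constructor
        · rintro ⟨h1, h2⟩; exact ⟨h2, h1.symm, hw⟩
        · rintro ⟨h1, h2, _⟩; exact ⟨h2.symm, h1⟩
      · rw [if_neg hw]
        symm
        refine Finset.sum_eq_zero fun y _ => ?_
        rw [if_neg]
        tauto
    rw [lhs, rhs, Finset.sum_comm]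
  -- any vertex at distance d+1 has a neighbor at distance d on a geodesic
  have hnbr : ∀ (d : ℕ) (x y : A), G.dist x y = d + 1 →
      ∃ w : A, G.Adj y w ∧ G.dist x w + 1 = G.dist x y := by
    intro d x y hxy
    obtain ⟨p, hp⟩ := SimpleGraph.exists_walk_of_dist_ne_zero (by omega : G.dist x y ≠ 0)
    have hrev : p.reverse.length = d + 1 := by
      rw [SimpleGraph.Walk.length_reverse, hp, hxy]
    cases hq : p.reverse with
    | nil => rw [hq] at hrev; simp at hrev
    | @cons _ w _ h q =>
      refine ⟨w, h, ?_⟩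
      have hql : q.length = d := by
        rw [hq] at hrev; simpa using hrev
      have h1 : G.dist x w ≤ d := by
        have := SimpleGraph.dist_le q.reverse
        rwa [SimpleGraph.Walk.length_reverse, hql] at this
      have h2 : G.dist x y ≤ G.dist x w + 1 := by
        have ht := hconn.dist_triangle (u := x) (v := w) (w := y)
        have hwy : G.dist w y = 1 := SimpleGraph.dist_eq_one_iff_adj.mpr h.symm
        omega
      omega
  intro d
  induction d with
  | zero => intro x; rw [base, base]
  | succ d ih =>
    intro x
    by_cases hc : c (d + 1) = 0
    · -- then no vertex is at distance d+1 from anything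
      have hzero : ∀ z : A, nAtDist G z (d + 1) = 0 := by
        intro z
        rw [nAtDist, Finset.card_eq_zero, Finset.filter_eq_empty_iff]
        intro y _
        intro hy
        obtain ⟨w, hw1, hw2⟩ := hnbr d z y hy
        have h := (hcb z y).1
        rw [hy, hc, Finset.card_eq_zero, Finset.filter_eq_empty_iff] at h
        exact h (Finset.mem_univ w) ⟨hw1, by omega⟩
      rw [hzero, hzero]
    · have e1 := key d x
      have e2 := key d r
      rw [ih x] at e1
      rw [← e2] at e1
      exact Nat.eq_of_mul_eq_mul_right (Nat.pos_of_ne_zero hc) e1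

lemma sum_exp_dist [DecidableRel G.Adj] (hconn : G.Connected) (hDR : IsDistanceRegular G)
    (ε : ℝ) (r x : A) :
    ∑ a : A, Real.exp (-(ε * G.dist x a)) = expDistSum G ε r := by
  rw [expDistSum]
  rw [← Finset.sum_fiberwise_of_maps_to (g := fun a => G.dist x a)
    (t := Finset.range (graphDiam G + 1)) (fun a _ => by
      rw [Finset.mem_range, Nat.lt_succ_iff]
      exact Finset.le_sup (f := fun p : A × A => G.dist p.1 p.2) (Finset.mem_univ (x, a)))]
  refine Finset.sum_congr rfl fun d _ => ?_
  rw [← nAtDist_eq G hconn hDR r d x, nAtDist]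
  calc ∑ a ∈ Finset.univ.filter (fun a => G.dist x a = d), Real.exp (-(ε * G.dist x a))
      = ∑ _a ∈ Finset.univ.filter (fun a => G.dist x a = d), Real.exp (-(ε * d)) :=
        Finset.sum_congr rfl fun a ha => by rw [(Finset.mem_filter.mp ha).2]
    _ = _ := by rw [Finset.sum_const, nsmul_eq_mul]

end Aux

theorem stmt0 {A B : Type*} [Fintype A] [Nonempty A] [Fintype B]
    (G : SimpleGraph A) [DecidableRel G.Adj]
    (hconn : G.Connected) (hDR : IsDistanceRegular G)
    (hcard : Fintype.card A ≤ Fintype.card B)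
    (ε : ℝ) (hε : 0 < ε)
    (M : A → B → ℝ)
    (hM0 : ∀ a b, 0 ≤ M a b)
    (hM1 : ∀ a, ∑ b, M a b = 1)
    (hdp : SatisfiesDP G ε M)
    (r : A) :
    (∑ b, Finset.univ.sup' Finset.univ_nonempty (fun a => M a b))
        ≤ (Fintype.card A : ℝ) / expDistSum G ε r ∧
    Real.logb 2 (expDistSum G ε r)
        ≤ -(Real.logb 2 ((1 / (Fintype.card A : ℝ)) *
            ∑ b, Finset.univ.sup' Finset.univ_nonempty (fun a => M a b))) := by
  set S := expDistSum G ε r with hS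
  set m : B → ℝ := fun b => Finset.univ.sup' Finset.univ_nonempty (fun a => M a b) with hm
  obtain ⟨a0⟩ := (inferInstance : Nonempty A)
  have hSx : ∀ x : A, ∑ a : A, Real.exp (-(ε * G.dist x a)) = S :=
    fun x => sum_exp_dist G hconn hDR ε r x
  have hSpos : 0 < S := by
    rw [← hSx a0]
    exact Finset.sum_pos (fun a _ => Real.exp_pos _) Finset.univ_nonempty
  -- key per-column bound
  have hcol : ∀ b : B, S * m b ≤ ∑ a : A, M a b := by
    intro b
    obtain ⟨ab, -, hab⟩ := Finset.exists_mem_eq_sup' Finset.univ_nonempty (fun a => M a b)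
    rw [← hSx ab, Finset.sum_mul]
    refine Finset.sum_le_sum fun a _ => ?_
    have hdd := dp_dist G ε M hdp hconn b ab a
    rw [hm]
    simp only []
    rw [hab]
    calc Real.exp (-(ε * G.dist ab a)) * M ab b
        ≤ Real.exp (-(ε * G.dist ab a)) * (Real.exp (ε * G.dist ab a) * M a b) :=
          mul_le_mul_of_nonneg_left hdd (Real.exp_pos _).le
      _ = M a b := by rw [← mul_assoc, ← Real.exp_add]; simp
  have hsum : S * ∑ b, m b ≤ (Fintype.card A : ℝ) := by
    rw [Finset.mul_sum]
    calc ∑ b, S * m b ≤ ∑ b, ∑ a, M a b := Finset.sum_le_sum fun b _ => hcol b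
      _ = ∑ a, ∑ b, M a b := Finset.sum_comm
      _ = ∑ a : A, (1 : ℝ) := Finset.sum_congr rfl fun a _ => hM1 a
      _ = (Fintype.card A : ℝ) := by simp
  have hfirst : (∑ b, m b) ≤ (Fintype.card A : ℝ) / S := by
    rw [le_div_iff₀ hSpos, mul_comm]
    exact hsum
  refine ⟨hfirst, ?_⟩
  -- second part
  have hone : (1 : ℝ) ≤ ∑ b, m b := by
    rw [← hM1 a0]
    exact Finset.sum_le_sum fun b _ => Finset.le_sup' (fun a => M a b) (Finset.mem_univ a0)
  have hApos : (0 : ℝ) < Fintype.card A := by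
    exact_mod_cast Fintype.card_pos
  set t : ℝ := (1 / (Fintype.card A : ℝ)) * ∑ b, m b with ht
  have htpos : 0 < t := by
    apply mul_pos (by positivity)
    linarith
  have htle : t ≤ S⁻¹ := by
    rw [ht]
    rw [div_mul_eq_mul_div, one_mul, div_le_iff₀ hApos]
    calc ∑ b, m b ≤ (Fintype.card A : ℝ) / S := hfirst
      _ = S⁻¹ * (Fintype.card A : ℝ) := by rw [div_eq_mul_inv, mul_comm]
  have hStinv : S ≤ t⁻¹ := by
    have h := inv_anti₀ htpos htle
    rwa [inv_inv] at h
  rw [← Real.logb_inv]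
  exact Real.logb_le_logb_of_le (by norm_num) hSpos hStinv
end

section
/- Let Ind and V be finite sets with |Ind| = u ≥ 1 and |V| = v ≥ 2, let X = V^Ind be the vertex set of the Hamming graph H(u,v), let Z be a finite set with |X| ≤ |Z|, let ε > 0, and let K be a channel matrix from X to Z satisfying ε-differential privacy with respect to the Hamming graph. Then the min-entropy leakage under the uniform input distribution satisfies I∞(X;Z) = log₂(Σ_{z∈Z} max_{x∈X} K(x,z)) ≤ u · log₂(v·e^ε / (v − 1 + e^ε)). -/
open Finset

/-- The Hamming graph on `Ind → V`: two tuples are adjacent iff they differ in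
exactly one coordinate. -/
def hammingGraph (Ind V : Type*) [Fintype Ind] [DecidableEq V] : SimpleGraph (Ind → V) where
  Adj x y := hammingDist x y = 1
  symm := ⟨by intro x y h; rwa [hammingDist_comm]⟩
  loopless := ⟨by intro x h; simp [hammingDist_self] at h⟩

/-! An `ε`-d.p. channel satisfies `M a b ≤ e^(ε d(a,a'))·M a' b` along graph distances, so for the
row `a` attaining the column maximum of `b`, `max_a M a b · ∑_{a'} e^(-ε d(a,a')) ≤ ∑_{a'} M a' b`.
Summing over `b` bounds `∑_b max_a M a b` by `|A|` divided by the size of an `e^(-ε d)`-weighted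
ball. In the Hamming graph the graph distance is the Hamming distance, and the weighted ball
factorises over coordinates into `(1 + (v - 1) e^(-ε))^u`, giving
`∑_z max_x K x z ≤ (v / (1 + (v - 1) e^(-ε)))^u`. -/

open SimpleGraph Function

section Hamming

variable {ι β : Type*} [Fintype ι] [DecidableEq β]

theorem hammingGraph_adj_update [DecidableEq ι] {x : ι → β} {i : ι} {a : β} (h : x i ≠ a) :
    (hammingGraph ι β).Adj x (update x i a) := by
  change #{j | x j ≠ update x i a j} = 1
  rw [Finset.card_eq_one]
  refine ⟨i, eq_singleton_iff_unique_mem.2 ⟨by simpa using h, fun j hj => ?_⟩⟩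
  by_contra hji
  simp [update_of_ne hji] at hj

theorem hammingDist_update_add_one [DecidableEq ι] {x y : ι → β} {i : ι} (h : x i ≠ y i) :
    hammingDist (update x i (y i)) y + 1 = hammingDist x y := by
  have : ({j | update x i (y i) j ≠ y j} : Finset ι) = ({j | x j ≠ y j} : Finset ι).erase i := by
    ext j
    by_cases hji : j = i
    · subst hji; simp
    · simp [hji]
  rw [hammingDist, hammingDist, this, Finset.card_erase_add_one (by simpa using h)]

theorem hammingDist_le_length {x y : ι → β} (p : (hammingGraph ι β).Walk x y) :
    hammingDist x y ≤ p.length := by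
  induction p with
  | nil => simp
  | @cons x w y hxw _ ih =>
    have hxw : hammingDist x w = 1 := hxw
    have := hammingDist_triangle x w y
    rw [Walk.length_cons]
    omega

theorem exists_walk_hammingGraph_length_eq [DecidableEq ι] (x y : ι → β) :
    ∃ p : (hammingGraph ι β).Walk x y, p.length = hammingDist x y := by
  induction h : hammingDist x y generalizing x with
  | zero => exact ⟨hammingDist_eq_zero.1 h ▸ Walk.nil, by cases hammingDist_eq_zero.1 h; rfl⟩
  | succ n ih =>
    obtain ⟨i, hi⟩ : ∃ i, x i ≠ y i := by
      by_contra! hxy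
      simp [funext hxy] at h
    obtain ⟨p, hp⟩ := ih (update x i (y i)) (by have := hammingDist_update_add_one hi; omega)
    exact ⟨Walk.cons (hammingGraph_adj_update hi) p, by rw [Walk.length_cons, hp]⟩

theorem hammingGraph_preconnected [DecidableEq ι] : (hammingGraph ι β).Preconnected := fun x y =>
  (exists_walk_hammingGraph_length_eq x y).elim fun p _ => p.reachable

theorem hammingGraph_dist [DecidableEq ι] (x y : ι → β) :
    (hammingGraph ι β).dist x y = hammingDist x y := by
  obtain ⟨p, hp⟩ := exists_walk_hammingGraph_length_eq x y
  obtain ⟨q, hq⟩ := (hammingGraph_preconnected x y).exists_walk_length_eq_dist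
  exact le_antisymm (hp ▸ dist_le p) (hq ▸ hammingDist_le_length q)

theorem sum_pow_hammingDist [DecidableEq ι] [Fintype β] {R : Type*} [CommSemiring R] (c : R)
    (y : ι → β) :
    ∑ x : ι → β, c ^ hammingDist y x =
      (1 + ((Fintype.card β - 1 : ℕ) : R) * c) ^ Fintype.card ι := by
  have hprod (x : ι → β) : c ^ hammingDist y x = ∏ i, if y i ≠ x i then c else 1 := by
    rw [← prod_filter, prod_const]; rfl
  have hfactor (i : ι) :
      ∑ a : β, (if y i ≠ a then c else 1) = 1 + ((Fintype.card β - 1 : ℕ) : R) * c := by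
    simp [sum_ite, filter_ne, filter_eq]
  rw [Fintype.sum_congr _ _ hprod, ← Fintype.prod_sum fun i a => if y i ≠ a then c else 1,
    Fintype.prod_congr _ _ hfactor, prod_const, card_univ]

end Hamming

namespace SatisfiesDP

variable {A B : Type*} {G : SimpleGraph A} {ε : ℝ} {M : A → B → ℝ}

theorem le_exp_pow_length_mul (hM : SatisfiesDP G ε M) {a a' : A} (p : G.Walk a a') (b : B) :
    M a b ≤ Real.exp ε ^ p.length * M a' b := by
  induction p with
  | nil => simp
  | @cons a w a' haw _ ih =>
    calc M a b ≤ Real.exp ε * M w b := hM b a w haw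
      _ ≤ Real.exp ε * (Real.exp ε ^ _ * M a' b) := by gcongr
      _ = Real.exp ε ^ (Walk.cons haw _).length * M a' b := by rw [Walk.length_cons]; ring

theorem exp_neg_pow_dist_mul_le (hM : SatisfiesDP G ε M) {a a' : A} (h : G.Reachable a a')
    (b : B) : Real.exp (-ε) ^ G.dist a a' * M a b ≤ M a' b := by
  obtain ⟨p, hp⟩ := h.exists_walk_length_eq_dist
  calc Real.exp (-ε) ^ G.dist a a' * M a b
      ≤ Real.exp (-ε) ^ G.dist a a' * (Real.exp ε ^ G.dist a a' * M a' b) := by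
        gcongr
        rw [← hp]
        exact hM.le_exp_pow_length_mul p b
    _ = M a' b := by rw [← mul_assoc, ← mul_pow, ← Real.exp_add]; simp

variable [Fintype A]

theorem mul_sum_exp_neg_pow_dist_le (hM : SatisfiesDP G ε M) (hG : G.Preconnected) (a : A)
    (b : B) : M a b * ∑ a', Real.exp (-ε) ^ G.dist a a' ≤ ∑ a', M a' b := by
  rw [mul_sum]
  exact sum_le_sum fun a' _ => (mul_comm _ _).trans_le (hM.exp_neg_pow_dist_mul_le (hG a a') b)

variable [Nonempty A] [Fintype B]

theorem sum_sup'_mul_le_card (hM : SatisfiesDP G ε M) (hG : G.Preconnected)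
    (hM0 : ∀ a b, 0 ≤ M a b) (hM1 : ∀ a, ∑ b, M a b = 1) {S : ℝ}
    (hS : ∀ a, S ≤ ∑ a', Real.exp (-ε) ^ G.dist a a') :
    (∑ b, univ.sup' univ_nonempty (M · b)) * S ≤ Fintype.card A := by
  have hcol (b : B) : univ.sup' univ_nonempty (M · b) * S ≤ ∑ a, M a b := by
    obtain ⟨a, -, ha⟩ := exists_mem_eq_sup' univ_nonempty (M · b)
    rw [ha]
    exact (mul_le_mul_of_nonneg_left (hS a) (hM0 a b)).trans
      (hM.mul_sum_exp_neg_pow_dist_le hG a b)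
  calc (∑ b, univ.sup' univ_nonempty (M · b)) * S
      ≤ ∑ b, ∑ a, M a b := by rw [sum_mul]; exact sum_le_sum fun b _ => hcol b
    _ = Fintype.card A := by rw [sum_comm]; simp [hM1]

end SatisfiesDP

theorem one_le_sum_sup' {A B : Type*} [Fintype A] [Nonempty A] [Fintype B] {M : A → B → ℝ}
    (hM1 : ∀ a, ∑ b, M a b = 1) : 1 ≤ ∑ b, univ.sup' univ_nonempty (M · b) := by
  obtain ⟨a⟩ := ‹Nonempty A›
  exact (hM1 a).symm.trans_le (sum_le_sum fun b _ => le_sup' (M · b) (mem_univ a))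

theorem stmt6_general {Ind V Z : Type*} [Fintype Ind] [DecidableEq Ind] [Fintype V] [DecidableEq V] [Nonempty V]
    [Fintype Z]
    (u v : ℕ) (hu : Fintype.card Ind = u)
    (hv : Fintype.card V = v)
    (ε : ℝ)
    (K : (Ind → V) → Z → ℝ)
    (hK0 : ∀ x z, 0 ≤ K x z)
    (hK1 : ∀ x, ∑ z, K x z = 1)
    (hdp : SatisfiesDP (hammingGraph Ind V) ε K) :
    Real.logb 2 (∑ z, Finset.univ.sup' Finset.univ_nonempty (fun x => K x z))
      ≤ (u : ℝ) * Real.logb 2 ((v : ℝ) * Real.exp ε / ((v : ℝ) - 1 + Real.exp ε)) := by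
  set S : ℝ := 1 + ((v : ℝ) - 1) * Real.exp (-ε)
  have hv1 : (1 : ℝ) ≤ v := by exact_mod_cast hv ▸ Fintype.card_pos
  have hS : 0 < S := by positivity
  have hball (x : Ind → V) : ∑ y, Real.exp (-ε) ^ (hammingGraph Ind V).dist x y = S ^ u := by
    simp_rw [hammingGraph_dist, sum_pow_hammingDist, hu, hv,
      Nat.cast_pred (hv ▸ Fintype.card_pos), S]
  have hbound := hdp.sum_sup'_mul_le_card hammingGraph_preconnected hK0 hK1 (fun x => (hball x).ge)
  have hratio : (v : ℝ) / S = v * Real.exp ε / (v - 1 + Real.exp ε) := by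
    rw [div_eq_div_iff hS.ne' (by positivity)]
    simp only [S, Real.exp_neg]
    field_simp
    ring
  rw [← hratio, ← Real.logb_pow, div_pow]
  refine Real.logb_le_logb_of_le one_lt_two (by linarith [one_le_sum_sup' hK1]) ?_
  rw [le_div_iff₀ (pow_pos hS u)]
  simpa [Fintype.card_fun, hu, hv] using hbound

theorem stmt6 {Ind V Z : Type*} [Fintype Ind] [DecidableEq Ind] [Fintype V] [DecidableEq V] [Nonempty V]
    [Fintype Z]
    (u v : ℕ) (hu : Fintype.card Ind = u) (hu1 : 1 ≤ u)
    (hv : Fintype.card V = v) (hv2 : 2 ≤ v)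
    (hcard : Fintype.card (Ind → V) ≤ Fintype.card Z)
    (ε : ℝ) (hε : 0 < ε)
    (K : (Ind → V) → Z → ℝ)
    (hK0 : ∀ x z, 0 ≤ K x z)
    (hK1 : ∀ x, ∑ z, K x z = 1)
    (hdp : SatisfiesDP (hammingGraph Ind V) ε K) :
    Real.logb 2 (∑ z, Finset.univ.sup' Finset.univ_nonempty (fun x => K x z))
      ≤ (u : ℝ) * Real.logb 2 ((v : ℝ) * Real.exp ε / ((v : ℝ) - 1 + Real.exp ε)) :=
  stmt6_general u v hu hv ε K hK0 hK1 hdp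
end

section
/- Let V be a finite set with |V| = v ≥ 2, let Z be a finite set with v ≤ |Z|, let ε > 0, and let M be a channel matrix from V to Z satisfying ε-differential privacy with respect to the complete graph on V (i.e., M(w,z) ≤ e^ε · M(w',z) for all distinct w, w' ∈ V and all z ∈ Z). Then the min-entropy leakage under the uniform input distribution satisfies I∞(V;Z) = log₂(Σ_{z∈Z} max_{w∈V} M(w,z)) ≤ log₂(v·e^ε / (v − 1 + e^ε)). -/
open Finset

theorem stmt8 {V Z : Type*} [Fintype V] [Nonempty V] [Fintype Z]
    (v : ℕ) (hv : Fintype.card V = v) (hv2 : 2 ≤ v)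
    (hcard : Fintype.card V ≤ Fintype.card Z)
    (ε : ℝ) (hε : 0 < ε)
    (M : V → Z → ℝ)
    (hM0 : ∀ w z, 0 ≤ M w z)
    (hM1 : ∀ w, ∑ z, M w z = 1)
    (hdp : ∀ (z : Z) (w w' : V), w ≠ w' → M w z ≤ Real.exp ε * M w' z) :
    Real.logb 2 (∑ z, Finset.univ.sup' Finset.univ_nonempty (fun w => M w z))
      ≤ Real.logb 2 ((v : ℝ) * Real.exp ε / ((v : ℝ) - 1 + Real.exp ε)) := by
  classical
  set E := Real.exp ε with hE
  have hE1 : 1 < E := Real.one_lt_exp_iff.mpr hε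
  have hE0 : 0 < E := lt_trans one_pos hE1
  have hvR : (2:ℝ) ≤ (v:ℝ) := by exact_mod_cast hv2
  have hden : 0 < (v:ℝ) - 1 + E := by linarith
  set m : Z → ℝ := fun z => Finset.univ.sup' Finset.univ_nonempty (fun w => M w z) with hm
  -- pointwise bound
  have key : ∀ z, ((v:ℝ) - 1 + E) * m z ≤ E * ∑ w, M w z := by
    intro z
    obtain ⟨w, -, hweq⟩ := Finset.exists_mem_eq_sup' Finset.univ_nonempty (fun w => M w z)
    have hmz : m z = M w z := hweq
    have hsum : ∑ w', M w' z = M w z + ∑ w' ∈ Finset.univ.erase w, M w' z := by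
      rw [← Finset.add_sum_erase _ _ (Finset.mem_univ w)]
    have hlow : ∀ w' ∈ Finset.univ.erase w, M w z / E ≤ M w' z := by
      intro w' hw'
      have hne : w ≠ w' := (Finset.ne_of_mem_erase hw').symm
      have := hdp z w w' hne
      rw [div_le_iff₀ hE0]
      linarith [this]
    have hcarde : (Finset.univ.erase w).card = v - 1 := by
      rw [Finset.card_erase_of_mem (Finset.mem_univ w), Finset.card_univ, hv]
    have hsum2 : ((v:ℝ) - 1) * (M w z / E) ≤ ∑ w' ∈ Finset.univ.erase w, M w' z := by
      calc ((v:ℝ) - 1) * (M w z / E) = ((v - 1 : ℕ) : ℝ) * (M w z / E) := by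
            push_cast [Nat.cast_sub (le_trans one_le_two hv2)]; ring
        _ = ∑ _w' ∈ Finset.univ.erase w, (M w z / E) := by
            rw [Finset.sum_const, hcarde, nsmul_eq_mul]
        _ ≤ _ := Finset.sum_le_sum hlow
    have : ((v:ℝ) - 1 + E) * M w z ≤ E * ∑ w', M w' z := by
      rw [hsum]
      have h1 : E * (((v:ℝ) - 1) * (M w z / E)) = ((v:ℝ) - 1) * M w z := by
        field_simp
      nlinarith [hM0 w z]
    rw [hmz]; exact this
  -- sum bound
  have hS1 : (1:ℝ) ≤ ∑ z, m z := by
    obtain ⟨w0⟩ := ‹Nonempty V›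
    calc (1:ℝ) = ∑ z, M w0 z := (hM1 w0).symm
      _ ≤ ∑ z, m z := Finset.sum_le_sum fun z _ =>
          Finset.le_sup' (fun w => M w z) (Finset.mem_univ w0)
  have hSle : ∑ z, m z ≤ (v:ℝ) * E / ((v:ℝ) - 1 + E) := by
    rw [le_div_iff₀ hden]
    calc (∑ z, m z) * ((v:ℝ) - 1 + E) = ∑ z, ((v:ℝ) - 1 + E) * m z := by
          rw [Finset.sum_mul]; congr 1; ext z; ring
      _ ≤ ∑ z, E * ∑ w, M w z := Finset.sum_le_sum fun z _ => key z
      _ = E * ∑ z, ∑ w, M w z := by rw [Finset.mul_sum]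
      _ = E * ∑ w, ∑ z, M w z := by rw [Finset.sum_comm]
      _ = E * (v:ℝ) := by
          rw [Finset.sum_congr rfl fun w _ => hM1 w, Finset.sum_const,
            Finset.card_univ, hv, nsmul_eq_mul, mul_one]
      _ = (v:ℝ) * E := mul_comm _ _
  exact Real.logb_le_logb_of_le one_lt_two (by linarith) hSle
end

section
/- Let V be a finite set with |V| = v ≥ 2 and let ε > 0. Define M : V → V → ℝ by M(w,w) = c and M(w,w') = c/e^ε for w ≠ w', where c = e^ε / (v − 1 + e^ε). Then M is a channel matrix from V to V, M satisfies ε-differential privacy with respect to the complete graph on V, and its min-entropy leakage under the uniform input distribution equals log₂(v·e^ε / (v − 1 + e^ε)); hence the individual leakage bound is tight. -/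
open Finset

theorem stmt9 {V : Type*} [Fintype V] [Nonempty V] [DecidableEq V]
    (v : ℕ) (hv : Fintype.card V = v) (hv2 : 2 ≤ v)
    (ε : ℝ) (hε : 0 < ε)
    (c : ℝ) (hc : c = Real.exp ε / ((v : ℝ) - 1 + Real.exp ε))
    (M : V → V → ℝ)
    (hM : ∀ w w' : V, M w w' = if w = w' then c else c / Real.exp ε) :
    (∀ w w' : V, 0 ≤ M w w') ∧
    (∀ w : V, ∑ w', M w w' = 1) ∧
    (∀ (z : V) (w w' : V), w ≠ w' → M w z ≤ Real.exp ε * M w' z) ∧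
    Real.logb 2 (∑ z, Finset.univ.sup' Finset.univ_nonempty (fun w => M w z))
      = Real.logb 2 ((v : ℝ) * Real.exp ε / ((v : ℝ) - 1 + Real.exp ε)) := by
  have hexp : (0:ℝ) < Real.exp ε := Real.exp_pos ε
  have hexp1 : (1:ℝ) ≤ Real.exp ε := Real.one_le_exp hε.le
  have hvR : (2:ℝ) ≤ (v:ℝ) := by exact_mod_cast hv2
  have hden : (0:ℝ) < (v : ℝ) - 1 + Real.exp ε := by linarith
  have hcpos : 0 < c := by rw [hc]; positivity
  have hle : c / Real.exp ε ≤ c := by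
    rw [div_le_iff₀ hexp]
    nlinarith
  have hnonneg : ∀ w w' : V, 0 ≤ M w w' := by
    intro w w'
    rw [hM]
    split
    · exact hcpos.le
    · positivity
  refine ⟨hnonneg, ?_, ?_, ?_⟩
  · intro w
    have h2 : ∀ x ∈ Finset.univ.erase w, M w x = c / Real.exp ε := by
      intro x hx
      simp only [Finset.mem_erase] at hx
      rw [hM, if_neg (fun h => hx.1 h.symm)]
    have : ∑ w', M w w' = c + ((v:ℝ) - 1) * (c / Real.exp ε) := by
      rw [← Finset.add_sum_erase _ _ (Finset.mem_univ w)]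
      congr 1
      · rw [hM]; simp
      · rw [Finset.sum_congr rfl h2, Finset.sum_const,
          Finset.card_erase_of_mem (Finset.mem_univ w), nsmul_eq_mul, Finset.card_univ, hv,
          Nat.cast_sub (by omega : 1 ≤ v), Nat.cast_one]
    rw [this, hc]
    field_simp
    ring
  · intro z w w' _
    rw [hM, hM]
    have hcancel : Real.exp ε * (c / Real.exp ε) = c := by field_simp
    split <;> split <;> (try rw [hcancel]) <;> nlinarith [hle, hcpos, hexp1]
  · have hsup : ∀ z : V, Finset.univ.sup' Finset.univ_nonempty (fun w => M w z) = c := by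
      intro z
      apply le_antisymm
      · apply Finset.sup'_le
        intro w _
        rw [hM]; split
        · exact le_refl c
        · exact hle
      · refine Finset.le_sup'_of_le _ (Finset.mem_univ z) ?_
        rw [hM, if_pos rfl]
    rw [Finset.sum_congr rfl (fun z _ => hsup z), Finset.sum_const, Finset.card_univ, hv,
      nsmul_eq_mul, hc]
    congr 1
    ring
end

section
/- Let G be a simple undirected graph on a finite set A, let B be a finite set with |A| ≤ |B|, let ε > 0, and let M be a channel matrix from A to B satisfying ε-differential privacy with respect to G. Then there exist an injection ι : A → B and a channel matrix M' from A to B such that: (i) for every a ∈ A, the column ι(a) of M' has its maximum on the diagonal, i.e. M'(a', ι(a)) ≤ M'(a, ι(a)) for all a' ∈ A; (ii) M'(a,b) = 0 for every a ∈ A and every b ∈ B not in the range of ι; (iii) M' satisfies ε-differential privacy with respect to G; and (iv) Σ_{b∈B} max_{a∈A} M'(a,b) = Σ_{b∈B} max_{a∈A} M(a,b), so the a posteriori min-entropy under the uniform input distribution is preserved. -/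
open Finset

theorem stmt10 {A B : Type*} [Fintype A] [Nonempty A] [Fintype B]
    (G : SimpleGraph A)
    (hcard : Fintype.card A ≤ Fintype.card B)
    (ε : ℝ) (hε : 0 < ε)
    (M : A → B → ℝ)
    (hM0 : ∀ a b, 0 ≤ M a b)
    (hM1 : ∀ a, ∑ b, M a b = 1)
    (hdp : SatisfiesDP G ε M) :
    ∃ (ι : A → B) (M' : A → B → ℝ),
      Function.Injective ι ∧
      (∀ a b, 0 ≤ M' a b) ∧
      (∀ a, ∑ b, M' a b = 1) ∧
      (∀ a a' : A, M' a' (ι a) ≤ M' a (ι a)) ∧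
      (∀ (a : A) (b : B), b ∉ Set.range ι → M' a b = 0) ∧
      SatisfiesDP G ε M' ∧
      (∑ b, Finset.univ.sup' Finset.univ_nonempty (fun a => M' a b))
        = (∑ b, Finset.univ.sup' Finset.univ_nonempty (fun a => M a b)) := by
  classical
  -- an injection ι : A → B
  obtain ⟨ι⟩ : Nonempty (A ↪ B) := Function.Embedding.nonempty_of_card_le hcard
  -- argmax function f : B → A
  have hf : ∀ b : B, ∃ a : A, Finset.univ.sup' Finset.univ_nonempty (fun a => M a b) = M a b := by
    intro b
    obtain ⟨a, _, ha⟩ := Finset.exists_mem_eq_sup' (Finset.univ_nonempty (α := A)) (fun a => M a b)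
    exact ⟨a, ha⟩
  choose f hfmax using hf
  have hfle : ∀ (b : B) (a : A), M a b ≤ M (f b) b := by
    intro b a
    rw [← hfmax b]
    exact Finset.le_sup' (fun a => M a b) (Finset.mem_univ a)
  -- the new channel
  set M' : A → B → ℝ := fun a b' =>
    match Function.partialInv ι b' with
    | some a₀ => ∑ b ∈ Finset.univ.filter (fun b => f b = a₀), M a b
    | none => 0 with hM'def
  have hcol : ∀ (a a₀ : A), M' a (ι a₀) = ∑ b ∈ Finset.univ.filter (fun b => f b = a₀), M a b := by
    intro a a₀
    simp [hM'def, Function.partialInv_left ι.injective]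
  have hnr : ∀ (a : A) (b : B), b ∉ Set.range ι → M' a b = 0 := by
    intro a b hb
    have : Function.partialInv ι b = none := by
      rw [Function.partialInv, dif_neg]
      intro ⟨a', ha'⟩
      exact hb ⟨a', ha'⟩
    simp [hM'def, this]
  refine ⟨ι, M', ι.injective, ?_, ?_, ?_, hnr, ?_, ?_⟩
  · -- nonneg
    intro a b
    rcases em (b ∈ Set.range ι) with ⟨a₀, rfl⟩ | h
    · rw [hcol]
      exact Finset.sum_nonneg fun b _ => hM0 a b
    · rw [hnr a b h]
  · -- row sums
    intro a
    have h0 : ∀ b ∈ Finset.univ, b ∉ Finset.univ.image ι → M' a b = 0 := by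
      intro b _ hb
      apply hnr a b
      rintro ⟨x, rfl⟩
      exact hb (Finset.mem_image_of_mem ι (Finset.mem_univ x))
    rw [← Finset.sum_subset (Finset.subset_univ _) h0,
      Finset.sum_image (fun x _ y _ h => ι.injective h)]
    simp_rw [hcol]
    exact (Finset.sum_fiberwise Finset.univ f (fun b => M a b)).trans (hM1 a)
  · -- diagonal max
    intro a a'
    rw [hcol, hcol]
    refine Finset.sum_le_sum fun b hb => ?_
    have : f b = a := (Finset.mem_filter.1 hb).2
    rw [← this]
    exact hfle b a'
  · -- DP
    intro b a a' hadj
    rcases em (b ∈ Set.range ι) with ⟨a₀, rfl⟩ | h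
    · rw [hcol, hcol, Finset.mul_sum]
      exact Finset.sum_le_sum fun b _ => hdp b a a' hadj
    · rw [hnr a b h, hnr a' b h, mul_zero]
  · -- min-entropy preserved
    have hsup' : ∀ a₀ : A, Finset.univ.sup' Finset.univ_nonempty (fun a => M' a (ι a₀))
        = M' a₀ (ι a₀) := by
      intro a₀
      apply le_antisymm
      · apply Finset.sup'_le
        intro a _
        rw [hcol, hcol]
        refine Finset.sum_le_sum fun b hb => ?_
        have : f b = a₀ := (Finset.mem_filter.1 hb).2
        rw [← this]
        exact hfle b a
      · exact Finset.le_sup' (fun a => M' a (ι a₀)) (Finset.mem_univ a₀)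
    have hsup0 : ∀ b : B, b ∉ Set.range ι →
        Finset.univ.sup' Finset.univ_nonempty (fun a => M' a b) = 0 := by
      intro b hb
      apply le_antisymm
      · apply Finset.sup'_le
        intro a _
        rw [hnr a b hb]
      · obtain ⟨a⟩ := (inferInstance : Nonempty A)
        have := Finset.le_sup' (fun a => M' a b) (Finset.mem_univ a)
        rw [hnr a b hb] at this
        exact this
    have h0 : ∀ b ∈ Finset.univ, b ∉ Finset.univ.image ι →
        Finset.univ.sup' Finset.univ_nonempty (fun a => M' a b) = 0 := by
      intro b _ hb
      apply hsup0 b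
      rintro ⟨x, rfl⟩
      exact hb (Finset.mem_image_of_mem ι (Finset.mem_univ x))
    rw [← Finset.sum_subset (Finset.subset_univ _) h0,
      Finset.sum_image (fun x _ y _ h => ι.injective h)]
    simp_rw [hsup', hcol]
    have : ∀ a₀ : A, ∑ b ∈ Finset.univ.filter (fun b => f b = a₀), M a₀ b
        = ∑ b ∈ Finset.univ.filter (fun b => f b = a₀), M (f b) b := by
      intro a₀
      refine Finset.sum_congr rfl fun b hb => ?_
      rw [(Finset.mem_filter.1 hb).2]
    simp_rw [this]
    rw [Finset.sum_fiberwise Finset.univ f (fun b => M (f b) b)]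
    exact Finset.sum_congr rfl fun b _ => (hfmax b).symm
end

section
/- Let G be a connected distance-regular graph on a finite set A, let B be a finite set, let ι : A → B be an injection, let ε > 0, and let M' be a channel matrix from A to B satisfying ε-differential privacy with respect to G such that M'(a', ι(a)) ≤ M'(a, ι(a)) for all a, a' ∈ A and M'(a,b) = 0 for every b ∈ B not in the range of ι. Then there exists a channel matrix M'' from A to B such that: (i) all diagonal entries of M'' are equal to the maximum entry of M'', i.e. M''(a, ι(a)) = max_{a'∈A, b∈B} M''(a',b) for every a ∈ A; (ii) M''(a,b) = 0 for every b ∈ B not in the range of ι; (iii) M'' satisfies ε-differential privacy with respect to G; and (iv) Σ_{b∈B} max_{a∈A} M''(a,b) = Σ_{b∈B} max_{a∈A} M'(a,b). -/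
/-!
Replace each entry `M'(a, ι x)` by the mean `g (d(x, a))` of `M'` over all pairs at the same
distance, where `g i = S i / K i` with `S i` the sum of `M'(a, ι x)` and `K i` the number of
pairs over `d(x, a) = i`. In a connected distance-regular graph the size `k i` of a sphere of
radius `i` does not depend on its centre, so `K i = n * k i`; this makes the rows of the averaged
matrix sum to `∑ i, S i / n = 1`, and diagonal dominance of `M'` gives `S i ≤ k i * S 0`, i.e.
`g i ≤ g 0`, while `n * g 0 = S 0` is the sum of the column maxima.

For privacy, count the edges between the spheres of radii `i + 1` and `i` about a centre `x` in
two ways: each vertex of the outer sphere has `c (i + 1)` neighbours in the inner one and each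
vertex of the inner sphere has `b i` neighbours in the outer one. Weighting the edges by `M'` at
either endpoint and using `ε`-privacy along each edge gives
`c (i + 1) * S (i + 1) ≤ e^ε * b i * S i` and the reverse, while unit weights give
`c (i + 1) * K (i + 1) = b i * K i`; dividing yields `g (i + 1) ≤ e^ε * g i` and
`g i ≤ e^ε * g (i + 1)`.
-/

open Finset

theorem div_le_mul_div_of_mul_eq_mul {p q r S S' K K' : ℝ} (hp : 0 < p) (hK : 0 < K)
    (hK' : 0 < K') (hpq : p * K = q * K') (hS : p * S ≤ r * (q * S')) :
    S / K ≤ r * (S' / K') := by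
  rw [mul_div_assoc', div_le_div_iff₀ hK hK']
  nlinarith [mul_le_mul_of_nonneg_right hS hK'.le, congrArg (· * (r * S')) hpq]

theorem Finset.sup'_eq_of_forall_le {ι α : Type*} [SemilatticeSup α] {s : Finset ι}
    (H : s.Nonempty) {f : ι → α} {j : ι} (hj : j ∈ s) (h : ∀ i ∈ s, f i ≤ f j) :
    s.sup' H f = f j :=
  le_antisymm (sup'_le H f h) (le_sup' f hj)

namespace SimpleGraph

variable {A : Type*} {G : SimpleGraph A}

theorem Connected.exists_adj_dist_eq (hconn : G.Connected) {x y : A} {i : ℕ}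
    (h : G.dist x y = i + 1) : ∃ w, G.Adj y w ∧ G.dist x w = i := by
  obtain ⟨p, hp⟩ := hconn.exists_walk_length_eq_dist y x
  cases p with
  | nil => simp_all
  | cons hadj q =>
    refine ⟨_, hadj, ?_⟩
    have hq := dist_le q
    have := hadj.diff_dist_adj (u := x)
    rw [Walk.length_cons, dist_comm] at hp
    rw [dist_comm] at hq
    omega

variable [Fintype A]

theorem Connected.dist_lt_card (hconn : G.Connected) (x y : A) :
    G.dist x y < Fintype.card A := by
  obtain ⟨p, hp, hl⟩ := hconn.exists_path_of_dist x y
  exact hl ▸ hp.length_lt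

variable (G) in
noncomputable def sphere (x : A) (i : ℕ) : Finset A := {y | G.dist x y = i}

@[simp]
theorem mem_sphere {x y : A} {i : ℕ} : y ∈ G.sphere x i ↔ G.dist x y = i := by
  simp [sphere]

theorem Connected.sphere_zero (hconn : G.Connected) (x : A) : G.sphere x 0 = {x} := by
  ext y
  simp [hconn.dist_eq_zero_iff, eq_comm]

theorem Connected.sum_range_sum_sphere {M : Type*} [AddCommMonoid M] (hconn : G.Connected)
    (x : A) (φ : A → M) :
    ∑ i ∈ range (Fintype.card A), ∑ y ∈ G.sphere x i, φ y = ∑ y, φ y :=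
  sum_fiberwise_of_maps_to (fun y _ => mem_range.2 (hconn.dist_lt_card x y)) φ

variable (G) in
noncomputable def shellSum (f : A → A → ℝ) (i : ℕ) : ℝ := ∑ x, ∑ a ∈ G.sphere x i, f a x

variable (G) in
/-- The mean of `f a x` over the pairs at distance `i` (`0` if there are none). -/
noncomputable def shellAvg (f : A → A → ℝ) (i : ℕ) : ℝ := G.shellSum f i / G.shellSum 1 i

variable {f : A → A → ℝ}

theorem shellSum_nonneg (hf : 0 ≤ f) (i : ℕ) : 0 ≤ G.shellSum f i :=
  sum_nonneg fun x _ => sum_nonneg fun a _ => hf a x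

theorem shellAvg_nonneg (hf : 0 ≤ f) (i : ℕ) : 0 ≤ G.shellAvg f i :=
  div_nonneg (shellSum_nonneg hf i) (shellSum_nonneg zero_le_one i)

theorem shellSum_one_pos {x a : A} {i : ℕ} (ha : a ∈ G.sphere x i) : 0 < G.shellSum 1 i :=
  sum_pos' (fun _ _ => sum_nonneg fun _ _ => zero_le_one)
    ⟨x, mem_univ x, sum_pos (fun _ _ => one_pos) ⟨a, ha⟩⟩

theorem Connected.shellSum_zero (hconn : G.Connected) : G.shellSum f 0 = ∑ x, f x x := by
  simp [shellSum, hconn.sphere_zero]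

theorem Connected.sum_range_shellSum (hconn : G.Connected) :
    ∑ i ∈ range (Fintype.card A), G.shellSum f i = ∑ a, ∑ x, f a x := by
  simp only [shellSum]
  exact sum_comm.trans ((sum_congr rfl fun x _ => hconn.sum_range_sum_sphere x _).trans sum_comm)

theorem Connected.card_mul_shellAvg_zero [Nonempty A] (hconn : G.Connected) :
    Fintype.card A * G.shellAvg f 0 = ∑ x, f x x := by
  simp only [shellAvg, hconn.shellSum_zero, Pi.one_apply, sum_const, card_univ, nsmul_one]
  exact mul_div_cancel₀ _ (Nat.cast_ne_zero.2 Fintype.card_ne_zero)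

variable [DecidableRel G.Adj]

variable (G) in
def IsDistanceRegularWith (c b : ℕ → ℕ) : Prop :=
  ∀ x y : A,
    #{w | G.Adj y w ∧ G.dist x w + 1 = G.dist x y} = c (G.dist x y) ∧
    #{w | G.Adj y w ∧ G.dist x w = G.dist x y + 1} = b (G.dist x y)

variable (G) in
noncomputable def sphereEdges (x : A) (i : ℕ) : Finset (A × A) :=
  {p ∈ G.sphere x (i + 1) ×ˢ G.sphere x i | G.Adj p.1 p.2}

namespace IsDistanceRegularWith

variable {c b : ℕ → ℕ} (h : G.IsDistanceRegularWith c b)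
include h

theorem card_adj_sphere_pred {x a : A} {i : ℕ} (ha : a ∈ G.sphere x (i + 1)) :
    #{w ∈ G.sphere x i | G.Adj a w} = c (i + 1) := by
  rw [mem_sphere] at ha
  rw [← ha, ← (h x a).1, ha]
  congr 1
  ext w
  simp [sphere, and_comm]

theorem card_adj_sphere_succ {x w : A} {i : ℕ} (hw : w ∈ G.sphere x i) :
    #{a ∈ G.sphere x (i + 1) | G.Adj a w} = b i := by
  rw [mem_sphere] at hw
  rw [← hw, ← (h x w).2, hw]
  congr 1
  ext a
  simp [sphere, adj_comm, and_comm]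

theorem sum_sphereEdges_fst {M : Type*} [AddCommMonoid M] (x : A) (i : ℕ) (φ : A → M) :
    ∑ p ∈ G.sphereEdges x i, φ p.1 = c (i + 1) • ∑ a ∈ G.sphere x (i + 1), φ a := by
  rw [sphereEdges, sum_filter, sum_product, smul_sum]
  refine sum_congr rfl fun a ha => ?_
  rw [← sum_filter]
  simp only [sum_const, h.card_adj_sphere_pred ha]

theorem sum_sphereEdges_snd {M : Type*} [AddCommMonoid M] (x : A) (i : ℕ) (φ : A → M) :
    ∑ p ∈ G.sphereEdges x i, φ p.2 = b i • ∑ w ∈ G.sphere x i, φ w := by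
  rw [sphereEdges, sum_filter, sum_product_right, smul_sum]
  refine sum_congr rfl fun w hw => ?_
  rw [← sum_filter]
  simp only [sum_const, h.card_adj_sphere_succ hw]

theorem card_sphere_succ_mul (x : A) (i : ℕ) :
    c (i + 1) * #(G.sphere x (i + 1)) = b i * #(G.sphere x i) := by
  simpa only [sum_const, smul_eq_mul, mul_one] using
    (h.sum_sphereEdges_fst x i fun _ => (1 : ℕ)).symm.trans
    (h.sum_sphereEdges_snd x i fun _ => 1)

theorem c_pos (hconn : G.Connected) {x a : A} {i : ℕ} (ha : a ∈ G.sphere x (i + 1)) :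
    0 < c (i + 1) := by
  obtain ⟨w, hadj, hw⟩ := hconn.exists_adj_dist_eq (mem_sphere.1 ha)
  rw [← h.card_adj_sphere_pred ha]
  exact card_pos.2 ⟨w, mem_filter.2 ⟨mem_sphere.2 hw, hadj⟩⟩

theorem b_pos (hconn : G.Connected) {x a : A} {i : ℕ} (ha : a ∈ G.sphere x (i + 1)) :
    0 < b i := by
  obtain ⟨w, hadj, hw⟩ := hconn.exists_adj_dist_eq (mem_sphere.1 ha)
  rw [← h.card_adj_sphere_succ (mem_sphere.2 hw)]
  exact card_pos.2 ⟨a, mem_filter.2 ⟨ha, hadj⟩⟩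

theorem card_sphere_eq (hconn : G.Connected) (x y : A) (i : ℕ) :
    #(G.sphere x i) = #(G.sphere y i) := by
  induction i with
  | zero => simp [hconn.sphere_zero]
  | succ i ih =>
    rcases (c (i + 1)).eq_zero_or_pos with hc | hc
    · have hempty : ∀ z, G.sphere z (i + 1) = ∅ := fun z =>
        eq_empty_of_forall_notMem fun a ha => (h.c_pos hconn ha).ne' hc
      simp [hempty]
    · apply Nat.eq_of_mul_eq_mul_left hc
      rw [h.card_sphere_succ_mul, h.card_sphere_succ_mul, ih]

theorem mul_sum_sphere_succ_le {r : ℝ} {φ : A → ℝ} (hφ : ∀ a w, G.Adj a w → φ a ≤ r * φ w)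
    (x : A) (i : ℕ) :
    c (i + 1) * ∑ a ∈ G.sphere x (i + 1), φ a ≤ r * (b i * ∑ w ∈ G.sphere x i, φ w) := by
  rw [← nsmul_eq_mul, ← nsmul_eq_mul, ← h.sum_sphereEdges_fst, ← h.sum_sphereEdges_snd, mul_sum]
  exact sum_le_sum fun p hp => hφ _ _ (mem_filter.1 hp).2

theorem mul_sum_sphere_le_succ {r : ℝ} {φ : A → ℝ} (hφ : ∀ a w, G.Adj a w → φ a ≤ r * φ w)
    (x : A) (i : ℕ) :
    b i * ∑ w ∈ G.sphere x i, φ w ≤ r * (c (i + 1) * ∑ a ∈ G.sphere x (i + 1), φ a) := by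
  rw [← nsmul_eq_mul, ← nsmul_eq_mul, ← h.sum_sphereEdges_fst, ← h.sum_sphereEdges_snd, mul_sum]
  exact sum_le_sum fun p hp => hφ _ _ (mem_filter.1 hp).2.symm

theorem shellSum_one (hconn : G.Connected) (x : A) (i : ℕ) :
    G.shellSum 1 i = Fintype.card A * #(G.sphere x i) := by
  simp [shellSum, h.card_sphere_eq hconn _ x]

theorem shellSum_one_succ_mul (i : ℕ) :
    c (i + 1) * G.shellSum 1 (i + 1) = b i * G.shellSum 1 i := by
  simp only [shellSum, Pi.one_apply, sum_const, nsmul_one, mul_sum]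
  exact_mod_cast sum_congr rfl fun x _ => h.card_sphere_succ_mul x i

theorem mul_shellSum_succ_le {ε : ℝ} (hf : SatisfiesDP G ε f) (i : ℕ) :
    c (i + 1) * G.shellSum f (i + 1) ≤ Real.exp ε * (b i * G.shellSum f i) := by
  simp only [shellSum, mul_sum (s := univ)]
  exact sum_le_sum fun x _ => h.mul_sum_sphere_succ_le (hf x) x i

theorem mul_shellSum_le_succ {ε : ℝ} (hf : SatisfiesDP G ε f) (i : ℕ) :
    b i * G.shellSum f i ≤ Real.exp ε * (c (i + 1) * G.shellSum f (i + 1)) := by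
  simp only [shellSum, mul_sum (s := univ)]
  exact sum_le_sum fun x _ => h.mul_sum_sphere_le_succ (hf x) x i

theorem card_sphere_mul_shellAvg (hconn : G.Connected) (x : A) (i : ℕ) :
    #(G.sphere x i) * G.shellAvg f i = G.shellSum f i / Fintype.card A := by
  rw [shellAvg, h.shellSum_one hconn x]
  rcases eq_or_ne #(G.sphere x i) 0 with hk | hk
  · have hS : G.shellSum f i = 0 := sum_eq_zero fun y _ => by
      rw [card_eq_zero.1 ((h.card_sphere_eq hconn y x i).trans hk), sum_empty]
    simp [hk, hS]
  · have : (Fintype.card A : ℝ) ≠ 0 := Nat.cast_ne_zero.2 ((Fintype.card_pos_iff.2 ⟨x⟩).ne')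
    field_simp

theorem sum_shellAvg_dist (hconn : G.Connected) (hrow : ∀ a, ∑ x, f a x = 1) (a : A) :
    ∑ x, G.shellAvg f (G.dist x a) = 1 := by
  have hn : (Fintype.card A : ℝ) ≠ 0 := Nat.cast_ne_zero.2 ((Fintype.card_pos_iff.2 ⟨a⟩).ne')
  calc ∑ x, G.shellAvg f (G.dist x a)
      = ∑ i ∈ range (Fintype.card A), ∑ x ∈ G.sphere a i, G.shellAvg f (G.dist a x) := by
        rw [hconn.sum_range_sum_sphere]
        simp only [dist_comm]
    _ = ∑ i ∈ range (Fintype.card A), #(G.sphere a i) * G.shellAvg f i := by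
        refine sum_congr rfl fun i _ => ?_
        rw [sum_congr rfl fun x hx => by rw [mem_sphere.1 hx], sum_const, nsmul_eq_mul]
    _ = 1 := by
        simp only [h.card_sphere_mul_shellAvg hconn, ← sum_div, hconn.sum_range_shellSum, hrow,
          sum_const, card_univ, nsmul_one, div_self hn]

theorem shellAvg_le_shellAvg_zero [Nonempty A] (hconn : G.Connected) (hf : 0 ≤ f)
    (hdiag : ∀ a x, f a x ≤ f x x) (i : ℕ) : G.shellAvg f i ≤ G.shellAvg f 0 := by
  obtain ⟨x₀⟩ := ‹Nonempty A›
  have hS : G.shellSum f i ≤ G.shellSum f 0 * #(G.sphere x₀ i) := by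
    rw [hconn.shellSum_zero, sum_mul]
    refine sum_le_sum fun x _ => ?_
    rw [← h.card_sphere_eq hconn x x₀ i, mul_comm, ← nsmul_eq_mul, ← sum_const]
    exact sum_le_sum fun a _ => hdiag a x
  rw [shellAvg, shellAvg, h.shellSum_one hconn x₀, h.shellSum_one hconn x₀, hconn.sphere_zero,
    card_singleton, Nat.cast_one, mul_one]
  rcases eq_or_ne #(G.sphere x₀ i) 0 with hk | hk
  · rw [hk, Nat.cast_zero, mul_zero, div_zero]
    exact div_nonneg (shellSum_nonneg hf 0) (Nat.cast_nonneg _)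
  · rw [mul_comm, ← div_div]
    gcongr
    exact div_le_of_le_mul₀ (Nat.cast_nonneg _) (shellSum_nonneg hf 0) hS

theorem shellAvg_succ_le (hconn : G.Connected) {ε : ℝ} (hf : SatisfiesDP G ε f) {x a : A}
    {i : ℕ} (ha : a ∈ G.sphere x (i + 1)) :
    G.shellAvg f (i + 1) ≤ Real.exp ε * G.shellAvg f i := by
  obtain ⟨w, -, hw⟩ := hconn.exists_adj_dist_eq (mem_sphere.1 ha)
  exact div_le_mul_div_of_mul_eq_mul (Nat.cast_pos.2 (h.c_pos hconn ha)) (shellSum_one_pos ha)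
    (shellSum_one_pos (mem_sphere.2 hw)) (h.shellSum_one_succ_mul i) (h.mul_shellSum_succ_le hf i)

theorem shellAvg_le_succ (hconn : G.Connected) {ε : ℝ} (hf : SatisfiesDP G ε f) {x a : A}
    {i : ℕ} (ha : a ∈ G.sphere x (i + 1)) :
    G.shellAvg f i ≤ Real.exp ε * G.shellAvg f (i + 1) := by
  obtain ⟨w, -, hw⟩ := hconn.exists_adj_dist_eq (mem_sphere.1 ha)
  exact div_le_mul_div_of_mul_eq_mul (Nat.cast_pos.2 (h.b_pos hconn ha))
    (shellSum_one_pos (mem_sphere.2 hw)) (shellSum_one_pos ha) (h.shellSum_one_succ_mul i).symm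
    (h.mul_shellSum_le_succ hf i)

theorem satisfiesDP_shellAvg_dist (hconn : G.Connected) {ε : ℝ} (hε : 0 ≤ ε) (hf0 : 0 ≤ f)
    (hf : SatisfiesDP G ε f) : SatisfiesDP G ε fun a x => G.shellAvg f (G.dist x a) := by
  intro x a a' hadj
  dsimp only
  have := hadj.diff_dist_adj (u := x)
  rcases (by omega : G.dist x a' = G.dist x a ∨ G.dist x a' = G.dist x a + 1 ∨
      G.dist x a = G.dist x a' + 1) with hd | hd | hd
  · rw [hd]
    exact le_mul_of_one_le_left (shellAvg_nonneg hf0 _) (Real.one_le_exp hε)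
  · rw [hd]
    exact h.shellAvg_le_succ hconn hf (mem_sphere.2 hd)
  · rw [hd]
    exact h.shellAvg_succ_le hconn hf (mem_sphere.2 hd)

end IsDistanceRegularWith

end SimpleGraph

theorem SatisfiesDP.extend_zero {A B : Type*} {G : SimpleGraph A} {ε : ℝ} {N : A → A → ℝ}
    {ι : A → B} (hN : SatisfiesDP G ε N) (hι : ι.Injective) :
    SatisfiesDP G ε fun a => Function.extend ι (N a) 0 := by
  intro b a a' hadj
  by_cases hb : ∃ x, ι x = b
  · obtain ⟨x, rfl⟩ := hb
    simp only [hι.extend_apply]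
    exact hN x a a' hadj
  · simp only [Function.extend_apply' _ _ _ hb, Pi.zero_apply, mul_zero, le_refl]

theorem extend_zero_le_extend_zero_diag {A B : Type*} {N : A → A → ℝ} {ι : A → B}
    (hι : ι.Injective) (hN0 : ∀ a, 0 ≤ N a a) (hN : ∀ a x a', N a x ≤ N a' a')
    (a : A) (b : B) (a' : A) :
    Function.extend ι (N a) 0 b ≤ Function.extend ι (N a') 0 (ι a') := by
  rw [hι.extend_apply]
  by_cases hb : ∃ x, ι x = b
  · obtain ⟨x, rfl⟩ := hb
    rw [hι.extend_apply]
    exact hN a x a'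
  · rw [Function.extend_apply' _ _ _ hb]
    exact hN0 a'

theorem sum_sup'_eq_sum_diag {A B R : Type*} [Fintype A] [Nonempty A] [Fintype B]
    [AddCommMonoid R] [SemilatticeSup R] {M : A → B → R} {ι : A → B} (hι : ι.Injective)
    (hM : ∀ a b, b ∉ Set.range ι → M a b = 0) (hdiag : ∀ x a, M a (ι x) ≤ M x (ι x)) :
    ∑ b, univ.sup' univ_nonempty (fun a => M a b) = ∑ x, M x (ι x) :=
  (Fintype.sum_of_injective ι hι _ _ (fun b hb => by simp only [hM _ b hb, sup'_const])
    fun x => (sup'_eq_of_forall_le _ (mem_univ x) fun a _ => hdiag x a).symm).symm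

theorem stmt11 {A B : Type*} [Fintype A] [Nonempty A] [Fintype B] [Nonempty B]
    (G : SimpleGraph A) [DecidableRel G.Adj]
    (hconn : G.Connected) (hDR : IsDistanceRegular G)
    (ι : A → B) (hι : Function.Injective ι)
    (ε : ℝ) (hε : 0 < ε)
    (M' : A → B → ℝ)
    (hM0 : ∀ a b, 0 ≤ M' a b)
    (hM1 : ∀ a, ∑ b, M' a b = 1)
    (hdp : SatisfiesDP G ε M')
    (hdiag : ∀ a a' : A, M' a' (ι a) ≤ M' a (ι a))
    (hzero : ∀ (a : A) (b : B), b ∉ Set.range ι → M' a b = 0) :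
    ∃ M'' : A → B → ℝ,
      (∀ a b, 0 ≤ M'' a b) ∧
      (∀ a, ∑ b, M'' a b = 1) ∧
      (∀ a : A, M'' a (ι a)
        = Finset.univ.sup' Finset.univ_nonempty (fun p : A × B => M'' p.1 p.2)) ∧
      (∀ (a : A) (b : B), b ∉ Set.range ι → M'' a b = 0) ∧
      SatisfiesDP G ε M'' ∧
      (∑ b, Finset.univ.sup' Finset.univ_nonempty (fun a => M'' a b))
        = (∑ b, Finset.univ.sup' Finset.univ_nonempty (fun a => M' a b)) := by
  obtain ⟨c, b, hreg⟩ : ∃ c b, G.IsDistanceRegularWith c b := hDR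
  set f : A → A → ℝ := fun a x => M' a (ι x)
  have hf0 : 0 ≤ f := fun a x => hM0 a (ι x)
  have hrow : ∀ a, ∑ x, f a x = 1 := fun a =>
    (Fintype.sum_of_injective ι hι _ _ (hzero a) fun _ => rfl).trans (hM1 a)
  set g := G.shellAvg f
  have hg_le : ∀ i, g i ≤ g 0 := hreg.shellAvg_le_shellAvg_zero hconn hf0 fun a x => hdiag x a
  set M'' : A → B → ℝ := fun a => Function.extend ι (fun x => g (G.dist x a)) 0
  have hM''ι : ∀ a x, M'' a (ι x) = g (G.dist x a) := fun a x => hι.extend_apply _ _ _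
  have hM''0 : ∀ a b, b ∉ Set.range ι → M'' a b = 0 := fun a b hb =>
    Function.extend_apply' _ _ _ hb
  have hM''le : ∀ a b a', M'' a b ≤ M'' a' (ι a') :=
    extend_zero_le_extend_zero_diag hι (fun _ => SimpleGraph.shellAvg_nonneg hf0 _)
      fun _ _ a' => by rw [SimpleGraph.dist_self]; exact hg_le _
  refine ⟨M'', fun a =>
    (Function.extend_nonneg (fun _ => SimpleGraph.shellAvg_nonneg hf0 _) le_rfl : 0 ≤ M'' a),
    fun a => ?_, fun a => (sup'_eq_of_forall_le _ (mem_univ (a, ι a)) fun p _ =>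
      hM''le p.1 p.2 a).symm, hM''0,
    (hreg.satisfiesDP_shellAvg_dist hconn hε.le hf0 fun x => hdp (ι x)).extend_zero hι, ?_⟩
  · rw [← Fintype.sum_of_injective ι hι _ _ (hM''0 a) fun x => (hM''ι a x).symm]
    exact hreg.sum_shellAvg_dist hconn hrow a
  · rw [sum_sup'_eq_sum_diag hι hM''0 fun x a => hM''le a (ι x) x,
      sum_sup'_eq_sum_diag hι hzero hdiag]
    simp only [hM''ι, SimpleGraph.dist_self, sum_const, card_univ, nsmul_eq_mul]
    exact hconn.card_mul_shellAvg_zero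
end

section
/- Let G be a connected VT⁺ graph on a finite set A, let B be a finite set, let ι : A → B be an injection, let ε > 0, and let M' be a channel matrix from A to B satisfying ε-differential privacy with respect to G such that M'(a', ι(a)) ≤ M'(a, ι(a)) for all a, a' ∈ A and M'(a,b) = 0 for every b ∈ B not in the range of ι. Then there exists a channel matrix M'' from A to B such that: (i) all diagonal entries of M'' are equal to the maximum entry of M'', i.e. M''(a, ι(a)) = max_{a'∈A, b∈B} M''(a',b) for every a ∈ A; (ii) M''(a,b) = 0 for every b ∈ B not in the range of ι; (iii) M'' satisfies ε-differential privacy with respect to G; and (iv) Σ_{b∈B} max_{a∈A} M''(a,b) = Σ_{b∈B} max_{a∈A} M'(a,b). -/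
open Finset

/-- VT⁺ graphs. -/
def IsVTPlus {A : Type*} [Fintype A] (G : SimpleGraph A) : Prop :=
  ∃ σ : Fin (Fintype.card A) → (G ≃g G), ∀ a a' : A, ∃ i, σ i a = a'

theorem stmt12 {A B : Type*} [Fintype A] [Nonempty A] [Fintype B] [Nonempty B]
    (G : SimpleGraph A)
    (hconn : G.Connected) (hVT : IsVTPlus G)
    (ι : A → B) (hι : Function.Injective ι)
    (ε : ℝ) (hε : 0 < ε)
    (M' : A → B → ℝ)
    (hM0 : ∀ a b, 0 ≤ M' a b)
    (hM1 : ∀ a, ∑ b, M' a b = 1)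
    (hdp : SatisfiesDP G ε M')
    (hdiag : ∀ a a' : A, M' a' (ι a) ≤ M' a (ι a))
    (hzero : ∀ (a : A) (b : B), b ∉ Set.range ι → M' a b = 0) :
    ∃ M'' : A → B → ℝ,
      (∀ a b, 0 ≤ M'' a b) ∧
      (∀ a, ∑ b, M'' a b = 1) ∧
      (∀ a : A, M'' a (ι a)
        = Finset.univ.sup' Finset.univ_nonempty (fun p : A × B => M'' p.1 p.2)) ∧
      (∀ (a : A) (b : B), b ∉ Set.range ι → M'' a b = 0) ∧
      SatisfiesDP G ε M'' ∧
      (∑ b, Finset.univ.sup' Finset.univ_nonempty (fun a => M'' a b))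
        = (∑ b, Finset.univ.sup' Finset.univ_nonempty (fun a => M' a b)) := by
  classical
  obtain ⟨σ, hσ⟩ := hVT
  have hnpos : 0 < ((Fintype.card A : ℕ) : ℝ) := by exact_mod_cast Fintype.card_pos
  have hninv : 0 ≤ ((Fintype.card A : ℕ) : ℝ)⁻¹ := by positivity
  -- for each a, i ↦ σ i a is a bijection Fin n → A
  have hbij : ∀ a : A, Function.Bijective (fun i : Fin (Fintype.card A) => σ i a) := by
    intro a
    rw [Fintype.bijective_iff_surjective_and_card]
    exact ⟨fun a' => hσ a a', by simp⟩
  have hsum : ∀ (a : A) (f : A → ℝ),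
      ∑ i : Fin (Fintype.card A), f (σ i a) = ∑ a' : A, f a' :=
    fun a f => Fintype.sum_bijective _ (hbij a) _ _ (fun i => rfl)
  -- permutations of B induced by σ i
  let τ : Fin (Fintype.card A) → Equiv.Perm B := fun i =>
    Equiv.Perm.extendDomain ((σ i).toEquiv) (Equiv.ofInjective ι hι)
  have hτ1 : ∀ i a, τ i (ι a) = ι (σ i a) := by
    intro i a
    have := Equiv.Perm.extendDomain_apply_image ((σ i).toEquiv) (Equiv.ofInjective ι hι) a
    simpa [τ, Equiv.ofInjective_apply] using this
  have hτ2 : ∀ i b, b ∉ Set.range ι → τ i b = b := fun i b hb =>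
    Equiv.Perm.extendDomain_apply_not_subtype ((σ i).toEquiv) (Equiv.ofInjective ι hι) hb
  -- definition of M''
  set M'' : A → B → ℝ := fun a b =>
    ((Fintype.card A : ℕ) : ℝ)⁻¹ * ∑ i, M' (σ i a) (τ i b) with hM''
  set d : ℝ := ((Fintype.card A : ℕ) : ℝ)⁻¹ * ∑ a' : A, M' a' (ι a') with hd
  have hd0 : 0 ≤ d :=
    mul_nonneg hninv (Finset.sum_nonneg fun a' _ => hM0 _ _)
  have nonneg : ∀ a b, 0 ≤ M'' a b := fun a b =>
    mul_nonneg hninv (Finset.sum_nonneg fun i _ => hM0 _ _)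
  have rowsum : ∀ a, ∑ b, M'' a b = 1 := by
    intro a
    simp only [hM'']
    rw [← Finset.mul_sum, Finset.sum_comm]
    have h1 : ∀ i : Fin (Fintype.card A), ∑ b, M' (σ i a) (τ i b) = 1 := by
      intro i
      rw [Equiv.sum_comp (τ i) (fun b => M' (σ i a) b)]
      exact hM1 _
    rw [Finset.sum_congr rfl (fun i _ => h1 i)]
    simp only [Finset.sum_const, Finset.card_univ, Fintype.card_fin, nsmul_eq_mul, mul_one]
    exact inv_mul_cancel₀ (ne_of_gt hnpos)
  have diag : ∀ a : A, M'' a (ι a) = d := by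
    intro a
    simp only [hM'', hd]
    congr 1
    rw [Finset.sum_congr rfl (fun i _ => by rw [hτ1 i a])]
    exact hsum a (fun a' => M' a' (ι a'))
  have zeros : ∀ (a : A) (b : B), b ∉ Set.range ι → M'' a b = 0 := by
    intro a b hb
    have h0 : ∀ i : Fin (Fintype.card A), M' (σ i a) (τ i b) = 0 := by
      intro i
      rw [hτ2 i b hb]
      exact hzero _ b hb
    simp only [hM'']
    rw [Finset.sum_eq_zero (fun i _ => h0 i), mul_zero]
  have ub : ∀ a b, M'' a b ≤ d := by
    intro a b
    by_cases hb : b ∈ Set.range ι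
    · obtain ⟨c, rfl⟩ := hb
      simp only [hM'', hd]
      have h1 : ∑ i, M' (σ i a) (τ i (ι c)) ≤ ∑ a' : A, M' a' (ι a') := by
        rw [← hsum c (fun a' => M' a' (ι a'))]
        refine Finset.sum_le_sum fun i _ => ?_
        rw [hτ1 i c]
        exact hdiag (σ i c) (σ i a)
      exact mul_le_mul_of_nonneg_left h1 hninv
    · rw [zeros a b hb]; exact hd0
  have supeq : Finset.univ.sup' Finset.univ_nonempty (fun p : A × B => M'' p.1 p.2) = d := by
    apply le_antisymm
    · exact Finset.sup'_le _ _ fun p _ => ub p.1 p.2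
    · obtain ⟨a⟩ := (inferInstance : Nonempty A)
      rw [← diag a]
      exact Finset.le_sup' (fun p : A × B => M'' p.1 p.2) (Finset.mem_univ (a, ι a))
  have dp : SatisfiesDP G ε M'' := by
    intro b a a' hadj
    have h1 : ∑ i, M' (σ i a) (τ i b) ≤ Real.exp ε * ∑ i, M' (σ i a') (τ i b) := by
      rw [Finset.mul_sum]
      exact Finset.sum_le_sum fun i _ =>
        hdp (τ i b) (σ i a) (σ i a') (((σ i).map_adj_iff).mpr hadj)
    simp only [hM'']
    calc ((Fintype.card A : ℕ) : ℝ)⁻¹ * ∑ i, M' (σ i a) (τ i b)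
        ≤ ((Fintype.card A : ℕ) : ℝ)⁻¹ * (Real.exp ε * ∑ i, M' (σ i a') (τ i b)) :=
          mul_le_mul_of_nonneg_left h1 hninv
      _ = Real.exp ε * (((Fintype.card A : ℕ) : ℝ)⁻¹ * ∑ i, M' (σ i a') (τ i b)) := by ring
  -- column sups
  have colsup'' : ∀ c : A,
      Finset.univ.sup' Finset.univ_nonempty (fun a => M'' a (ι c)) = d := by
    intro c
    apply le_antisymm
    · exact Finset.sup'_le _ _ fun a _ => ub a (ι c)
    · rw [← diag c]
      exact Finset.le_sup' (fun a => M'' a (ι c)) (Finset.mem_univ c)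
  have colsup0 : ∀ (N : A → B → ℝ), (∀ a b, b ∉ Set.range ι → N a b = 0) →
      ∀ b, b ∉ Set.range ι →
      Finset.univ.sup' Finset.univ_nonempty (fun a => N a b) = 0 := by
    intro N hN b hb
    apply le_antisymm
    · exact Finset.sup'_le _ _ fun a _ => le_of_eq (hN a b hb)
    · obtain ⟨a⟩ := (inferInstance : Nonempty A)
      rw [← hN a b hb]
      exact Finset.le_sup' (fun a => N a b) (Finset.mem_univ a)
  have colsup' : ∀ c : A,
      Finset.univ.sup' Finset.univ_nonempty (fun a => M' a (ι c)) = M' c (ι c) := by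
    intro c
    apply le_antisymm
    · exact Finset.sup'_le _ _ fun a _ => hdiag c a
    · exact Finset.le_sup' (fun a => M' a (ι c)) (Finset.mem_univ c)
  -- reduce sums over B to sums over the range of ι
  have sumrange : ∀ (g : B → ℝ), (∀ b, b ∉ Set.range ι → g b = 0) →
      ∑ b, g b = ∑ a, g (ι a) := by
    intro g hg
    rw [← Finset.sum_image (f := g) (g := ι) (fun a _ a' _ h => hι h)]
    apply (Finset.sum_subset (Finset.subset_univ _) _).symm
    intro b _ hb
    apply hg
    rintro ⟨a, ha⟩
    exact hb (Finset.mem_image.mpr ⟨a, Finset.mem_univ a, ha⟩)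
  refine ⟨M'', nonneg, rowsum, fun a => by rw [diag a, supeq], zeros, dp, ?_⟩
  rw [sumrange _ (colsup0 M'' zeros), sumrange _ (colsup0 M' hzero)]
  rw [Finset.sum_congr rfl (fun a _ => colsup'' a),
      Finset.sum_congr rfl (fun a _ => colsup' a)]
  simp only [Finset.sum_const, Finset.card_univ, nsmul_eq_mul, hd]
  rw [← mul_assoc, mul_inv_cancel₀ (ne_of_gt hnpos), one_mul]
end

section
/- Let Y and Z be finite nonempty sets, let p be a probability distribution on Y, and let H be a channel matrix from Y to Z. Then for every guess function g : Z → Y, U(g) ≤ Σ_{z∈Z} max_{y∈Y} (p(y) · H(y,z)), and there exists a guess function attaining equality; hence the maximal utility with binary gain over all guess functions equals Σ_{z∈Z} max_{y∈Y} (p(y) · H(y,z)) = 2^{−H∞(Y|Z)}. -/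
open Finset

theorem stmt17 {Y Z : Type*} [Fintype Y] [Nonempty Y] [Fintype Z]
    (p : Y → ℝ) (hp0 : ∀ y, 0 ≤ p y) (hp1 : ∑ y, p y = 1)
    (H : Y → Z → ℝ)
    (hH0 : ∀ y z, 0 ≤ H y z)
    (hH1 : ∀ y, ∑ z, H y z = 1)
    (S : ℝ)
    (hS : S = ∑ z, Finset.univ.sup' Finset.univ_nonempty (fun y => p y * H y z)) :
    (∀ g : Z → Y, ∑ z, p (g z) * H (g z) z ≤ S) ∧
    (∃ g : Z → Y, ∑ z, p (g z) * H (g z) z = S) ∧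
    S = (2 : ℝ) ^ (-(-(Real.logb 2 S))) := by
  have hub : ∀ g : Z → Y, ∑ z, p (g z) * H (g z) z ≤ S := by
    intro g
    rw [hS]
    apply Finset.sum_le_sum
    intro z _
    exact Finset.le_sup' (fun y => p y * H y z) (Finset.mem_univ (g z))
  have hg : ∀ z : Z, ∃ y : Y, Finset.univ.sup' Finset.univ_nonempty
      (fun y => p y * H y z) = p y * H y z := by
    intro z
    obtain ⟨y, _, hy⟩ := Finset.exists_mem_eq_sup' Finset.univ_nonempty
      (fun y => p y * H y z)
    exact ⟨y, hy⟩
  choose g hgeq using hg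
  have heq : ∑ z, p (g z) * H (g z) z = S := by
    rw [hS]
    exact (Finset.sum_congr rfl fun z _ => (hgeq z)).symm
  have hSpos : 0 < S := by
    obtain ⟨y0, hy0⟩ : ∃ y0 : Y, 0 < p y0 := by
      by_contra h
      push_neg at h
      have : ∑ y, p y = 0 := Finset.sum_eq_zero fun y _ =>
        le_antisymm (h y) (hp0 y)
      linarith [hp1]
    have : p y0 = ∑ z, p y0 * H y0 z := by
      rw [← Finset.mul_sum, hH1, mul_one]
    have hle : p y0 ≤ S := by
      rw [hS, this]
      exact Finset.sum_le_sum fun z _ =>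
        Finset.le_sup' (fun y => p y * H y z) (Finset.mem_univ y0)
    linarith
  refine ⟨hub, ⟨g, heq⟩, ?_⟩
  rw [neg_neg, Real.rpow_logb (by norm_num) (by norm_num) hSpos]
end
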